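/- For every u ∈ ℝ, ∂f̃_a/∂u (u, π/2) = ξ_a(u)·(1, 0, 0); consequently, the curve u ↦ f̃_a(u, π/2) is a straight line parallel to the x₀-axis. -/

import Mathlib

open Real

noncomputable def xi (a t : ℝ) : ℝ :=
  2 / Real.sqrt (2 * Real.cos (4 * t) + (a ^ 4 + (a ^ 4)⁻¹))

noncomputable def gam (a : ℝ) (s : ℝ) : ℝ × ℝ × ℝ :=
  (∫ t in (0:ℝ)..s, xi a t,
   ∫ t in (0:ℝ)..s, -(xi a t * Real.cos t),
   ∫ t in (0:ℝ)..s, -(xi a t * Real.sin t))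

noncomputable def ftilde (a : ℝ) (u v : ℝ) : ℝ × ℝ × ℝ :=
  (1/2 : ℝ) • (gam a (u + v) + gam a (u - v))

/-!
Since `ftilde a u v` is the average of `gam a` at `u ± v`, its `u`-derivative at `v = π/2` is the
average of `gam' = xi a · (1, -cos, -sin)` at `u ± π/2`. As `xi a` is `π/2`-periodic, both values
carry the same factor `xi a u`, while `(cos, sin)` at `u + π/2` and `u - π/2` are opposite, so the
last two coordinates cancel.
-/

lemma two_lt_add_inv {x : ℝ} (hx₀ : 0 < x) (hx₁ : x ≠ 1) : 2 < x + x⁻¹ := by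
  have hsq : 0 < (x - 1) ^ 2 / x := div_pos (sq_pos_of_ne_zero (sub_ne_zero.2 hx₁)) hx₀
  have : (x - 1) ^ 2 / x = x + x⁻¹ - 2 := by field_simp; ring
  linarith

lemma xi_denom_pos {a : ℝ} (ha₀ : a ≠ 0) (ha₁ : a ^ 4 ≠ 1) (t : ℝ) :
    0 < 2 * cos (4 * t) + (a ^ 4 + (a ^ 4)⁻¹) := by
  have := two_lt_add_inv (by positivity) ha₁
  linarith [neg_one_le_cos (4 * t)]

lemma continuous_xi {a : ℝ} (ha₀ : a ≠ 0) (ha₁ : a ^ 4 ≠ 1) : Continuous (xi a) :=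
  continuous_const.div (by fun_prop) fun t => (sqrt_pos.2 (xi_denom_pos ha₀ ha₁ t)).ne'

lemma xi_periodic (a : ℝ) : Function.Periodic (xi a) (π / 2) := by
  have hcos : Function.Periodic (fun t => cos (4 * t)) (π / 2) := by
    simpa only [show (4 : ℝ)⁻¹ * (2 * π) = π / 2 by ring] using cos_periodic.const_mul 4
  intro t
  simp only [xi, hcos t]

lemma hasDerivAt_gam {a : ℝ} (hxi : Continuous (xi a)) (s : ℝ) :
    HasDerivAt (gam a) (xi a s, -(xi a s * cos s), -(xi a s * sin s)) s :=
  (hxi.integral_hasStrictDerivAt 0 s).hasDerivAt.prodMk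
    (((hxi.mul continuous_cos).neg.integral_hasStrictDerivAt 0 s).hasDerivAt.prodMk
      ((hxi.mul continuous_sin).neg.integral_hasStrictDerivAt 0 s).hasDerivAt)

lemma hasDerivAt_ftilde {a : ℝ} (hxi : Continuous (xi a)) (u v : ℝ) :
    HasDerivAt (fun u' => ftilde a u' v)
      ((1 / 2 : ℝ) • ((xi a (u + v), -(xi a (u + v) * cos (u + v)), -(xi a (u + v) * sin (u + v)))
        + (xi a (u - v), -(xi a (u - v) * cos (u - v)), -(xi a (u - v) * sin (u - v))))) u := by
  have hplus := (hasDerivAt_gam hxi (u + v)).comp_add_const u v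
  have hminus := (hasDerivAt_gam hxi (u - v)).comp_sub_const u v
  exact (hplus.add hminus).const_smul (1 / 2 : ℝ)

lemma hasDerivAt_ftilde_pi_div_two {a : ℝ} (hxi : Continuous (xi a)) (u : ℝ) :
    HasDerivAt (fun u' => ftilde a u' (π / 2)) (xi a u, 0, 0) u := by
  convert hasDerivAt_ftilde hxi u (π / 2) using 1
  simp only [(xi_periodic a) u, (xi_periodic a).sub_eq u, cos_add_pi_div_two, cos_sub_pi_div_two,
    sin_add_pi_div_two, sin_sub_pi_div_two, Prod.smul_mk, Prod.mk_add_mk, smul_eq_mul]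
  ext <;> ring

theorem statement6 (a : ℝ) (ha : a ∈ Set.Ioo (0:ℝ) 1) :
    (∀ u : ℝ, HasDerivAt (fun u' => ftilde a u' (π / 2)) (xi a u, 0, 0) u) ∧
    (∀ u : ℝ, (ftilde a u (π / 2)).2 = (ftilde a 0 (π / 2)).2) := by
  have hxi : Continuous (xi a) :=
    continuous_xi ha.1.ne' (pow_lt_one₀ ha.1.le ha.2 (by norm_num)).ne
  have hderiv := hasDerivAt_ftilde_pi_div_two hxi
  have hderiv_snd (u : ℝ) : HasDerivAt (fun u' => (ftilde a u' (π / 2)).2) (0 : ℝ × ℝ) u :=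
    (hderiv u).snd
  exact ⟨hderiv, fun u => is_const_of_deriv_eq_zero
    (fun x => (hderiv_snd x).differentiableAt) (fun x => (hderiv_snd x).deriv) u 0⟩
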